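/- arXiv:1801.03951 — 3 statements merged into one kernel-verified Lean document; each statement's English description precedes it below -/
import Mathlib

section
/- Define the global BP threshold ε*_G = sup{ε ∈ [0,1] : lim_{l→∞} x_l(ε) = 0} (where x_l is the 2D density-evolution sequence), and define ε̂ = sup{ε ∈ [0,1] : the fixed-point system x=f(ε,x,y), y=g(ε,x,y) has no solution with x ∈ (0,1], y ∈ [0,1]}. Then ε*_G = ε̂. -/
open Set Polynomial Filter

private lemma poly_eval_nonneg (p : Polynomial ℝ) (h : ∀ i, 0 ≤ p.coeff i)
    {t : ℝ} (ht : 0 ≤ t) : 0 ≤ p.eval t := by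
  rw [Polynomial.eval_eq_sum_range]
  exact Finset.sum_nonneg fun i _ => mul_nonneg (h i) (pow_nonneg ht i)

private lemma poly_eval_mono (p : Polynomial ℝ) (h : ∀ i, 0 ≤ p.coeff i)
    {a b : ℝ} (ha : 0 ≤ a) (hab : a ≤ b) : p.eval a ≤ p.eval b := by
  rw [Polynomial.eval_eq_sum_range, Polynomial.eval_eq_sum_range]
  exact Finset.sum_le_sum fun i _ =>
    mul_le_mul_of_nonneg_left (pow_le_pow_left₀ ha hab i) (h i)

/-- Fixed-point characterization of the global BP threshold:
ε*_G = sup{ε ∈ [0,1] : lim x_l(ε) = 0} equals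
ε̂ = sup{ε ∈ [0,1] : the fixed-point system has no solution with x ∈ (0,1], y ∈ [0,1]}.
`X e (l+1)` plays the role of `x_l(e)`, with `X e 0 = 1` playing `x₋₁(e)`. -/
theorem ldpcl_threshold_fixed_point_characterization
    (lamL rhoL lamJ rhoJ LamL LamJ : Polynomial ℝ)
    (hcoef : ∀ p ∈ [lamL, rhoL, lamJ, rhoJ, LamL, LamJ], ∀ i, 0 ≤ p.coeff i)
    (hmap : ∀ p ∈ [lamL, rhoL, lamJ, rhoJ, LamL, LamJ],
      ∀ t ∈ Icc (0:ℝ) 1, p.eval t ∈ Icc (0:ℝ) 1)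
    (hLamL0 : LamL.eval 0 = 0)
    (hrhoL1 : rhoL.eval 1 = 1) (hrhoJ1 : rhoJ.eval 1 = 1)
    (X Y : ℝ → ℕ → ℝ)
    (hX0 : ∀ e, X e 0 = 1) (hY0 : ∀ e, Y e 0 = 1)
    (hX : ∀ e l, X e (l+1) =
      e * lamL.eval (1 - rhoL.eval (1 - X e l)) * LamJ.eval (1 - rhoJ.eval (1 - Y e l)))
    (hY : ∀ e l, Y e (l+1) =
      e * LamL.eval (1 - rhoL.eval (1 - X e l)) * lamJ.eval (1 - rhoJ.eval (1 - Y e l))) :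
    sSup {e ∈ Icc (0:ℝ) 1 | Tendsto (X e) atTop (nhds 0)} =
    sSup {e ∈ Icc (0:ℝ) 1 | ¬ ∃ x y : ℝ, x ∈ Ioc (0:ℝ) 1 ∧ y ∈ Icc (0:ℝ) 1 ∧
      x = e * lamL.eval (1 - rhoL.eval (1 - x)) * LamJ.eval (1 - rhoJ.eval (1 - y)) ∧
      y = e * LamL.eval (1 - rhoL.eval (1 - x)) * lamJ.eval (1 - rhoJ.eval (1 - y))} := by
  have m1 : lamL ∈ [lamL, rhoL, lamJ, rhoJ, LamL, LamJ] := by simp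
  have m2 : rhoL ∈ [lamL, rhoL, lamJ, rhoJ, LamL, LamJ] := by simp
  have m3 : lamJ ∈ [lamL, rhoL, lamJ, rhoJ, LamL, LamJ] := by simp
  have m4 : rhoJ ∈ [lamL, rhoL, lamJ, rhoJ, LamL, LamJ] := by simp
  have m5 : LamL ∈ [lamL, rhoL, lamJ, rhoJ, LamL, LamJ] := by simp
  have m6 : LamJ ∈ [lamL, rhoL, lamJ, rhoJ, LamL, LamJ] := by simp
  have hmono : ∀ p ∈ [lamL, rhoL, lamJ, rhoJ, LamL, LamJ], ∀ a b : ℝ, 0 ≤ a → a ≤ b →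
      p.eval a ≤ p.eval b := fun p hp a b ha hab => poly_eval_mono p (hcoef p hp) ha hab
  -- the inner maps x ↦ 1 - r(1-x)
  have hinm : ∀ r ∈ [lamL, rhoL, lamJ, rhoJ, LamL, LamJ], ∀ x x' : ℝ,
      x ∈ Icc (0:ℝ) 1 → x' ∈ Icc (0:ℝ) 1 → x ≤ x' →
      (1 - r.eval (1 - x')) ∈ Icc (0:ℝ) 1 ∧
      (1 - r.eval (1 - x)) ≤ (1 - r.eval (1 - x')) := by
    intro r hr x x' hx hx' hle
    have h1 : (1 - x') ∈ Icc (0:ℝ) 1 := ⟨by linarith [hx'.2], by linarith [hx'.1]⟩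
    have h2 : (1 - x) ∈ Icc (0:ℝ) 1 := ⟨by linarith [hx.2], by linarith [hx.1]⟩
    have e1 := hmap r hr _ h1
    have e2 := hmap r hr _ h2
    refine ⟨⟨by linarith [e1.2], by linarith [e1.1]⟩, ?_⟩
    have := hmono r hr (1 - x') (1 - x) h1.1 (by linarith)
    linarith
  suffices h : ∀ e ∈ Icc (0:ℝ) 1, (Tendsto (X e) atTop (nhds 0) ↔
      ¬ ∃ x y : ℝ, x ∈ Ioc (0:ℝ) 1 ∧ y ∈ Icc (0:ℝ) 1 ∧
      x = e * lamL.eval (1 - rhoL.eval (1 - x)) * LamJ.eval (1 - rhoJ.eval (1 - y)) ∧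
      y = e * LamL.eval (1 - rhoL.eval (1 - x)) * lamJ.eval (1 - rhoJ.eval (1 - y))) by
    congr 1
    ext e
    exact ⟨fun ⟨he, hp⟩ => ⟨he, (h e he).1 hp⟩, fun ⟨he, hp⟩ => ⟨he, (h e he).2 hp⟩⟩
  rintro e ⟨he0, he1⟩
  -- membership of one step
  have hFmem : ∀ x y : ℝ, x ∈ Icc (0:ℝ) 1 → y ∈ Icc (0:ℝ) 1 →
      e * lamL.eval (1 - rhoL.eval (1 - x)) * LamJ.eval (1 - rhoJ.eval (1 - y)) ∈ Icc (0:ℝ) 1 ∧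
      e * LamL.eval (1 - rhoL.eval (1 - x)) * lamJ.eval (1 - rhoJ.eval (1 - y)) ∈ Icc (0:ℝ) 1 := by
    intro x y hx hy
    have aX := (hinm rhoL m2 x x hx hx le_rfl).1
    have aY := (hinm rhoJ m4 y y hy hy le_rfl).1
    have A1 := hmap lamL m1 _ aX
    have A2 := hmap LamL m5 _ aX
    have B1 := hmap LamJ m6 _ aY
    have B2 := hmap lamJ m3 _ aY
    constructor
    · exact ⟨mul_nonneg (mul_nonneg he0 A1.1) B1.1,
        mul_le_one₀ (mul_le_one₀ he1 A1.1 A1.2) B1.1 B1.2⟩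
    · exact ⟨mul_nonneg (mul_nonneg he0 A2.1) B2.1,
        mul_le_one₀ (mul_le_one₀ he1 A2.1 A2.2) B2.1 B2.2⟩
  -- joint monotonicity of one step
  have hFmono : ∀ x x' y y' : ℝ, x ∈ Icc (0:ℝ) 1 → x' ∈ Icc (0:ℝ) 1 →
      y ∈ Icc (0:ℝ) 1 → y' ∈ Icc (0:ℝ) 1 → x ≤ x' → y ≤ y' →
      (e * lamL.eval (1 - rhoL.eval (1 - x)) * LamJ.eval (1 - rhoJ.eval (1 - y)) ≤
        e * lamL.eval (1 - rhoL.eval (1 - x')) * LamJ.eval (1 - rhoJ.eval (1 - y')) ∧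
       e * LamL.eval (1 - rhoL.eval (1 - x)) * lamJ.eval (1 - rhoJ.eval (1 - y)) ≤
        e * LamL.eval (1 - rhoL.eval (1 - x')) * lamJ.eval (1 - rhoJ.eval (1 - y'))) := by
    intro x x' y y' hx hx' hy hy' hxx hyy
    obtain ⟨aX', aXle⟩ := hinm rhoL m2 x x' hx hx' hxx
    obtain ⟨aY', aYle⟩ := hinm rhoJ m4 y y' hy hy' hyy
    have aX := (hinm rhoL m2 x x hx hx le_rfl).1
    have aY := (hinm rhoJ m4 y y hy hy le_rfl).1
    have A1 := hmap lamL m1 _ aX; have A1' := hmap lamL m1 _ aX'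
    have A2 := hmap LamL m5 _ aX; have A2' := hmap LamL m5 _ aX'
    have B1 := hmap LamJ m6 _ aY; have B1' := hmap LamJ m6 _ aY'
    have B2 := hmap lamJ m3 _ aY; have B2' := hmap lamJ m3 _ aY'
    have A1le := hmono lamL m1 _ _ aX.1 aXle
    have A2le := hmono LamL m5 _ _ aX.1 aXle
    have B1le := hmono LamJ m6 _ _ aY.1 aYle
    have B2le := hmono lamJ m3 _ _ aY.1 aYle
    constructor
    · exact mul_le_mul (mul_le_mul_of_nonneg_left A1le he0) B1le B1.1
        (mul_nonneg he0 A1'.1)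
    · exact mul_le_mul (mul_le_mul_of_nonneg_left A2le he0) B2le B2.1
        (mul_nonneg he0 A2'.1)
  -- the sequences stay in [0,1]
  have hbd : ∀ l, X e l ∈ Icc (0:ℝ) 1 ∧ Y e l ∈ Icc (0:ℝ) 1 := by
    intro l
    induction l with
    | zero => rw [hX0, hY0]; exact ⟨⟨zero_le_one, le_refl 1⟩, ⟨zero_le_one, le_refl 1⟩⟩
    | succ l ih => rw [hX, hY]; exact hFmem _ _ ih.1 ih.2
  -- the sequences are non-increasing
  have hanti : ∀ l, X e (l+1) ≤ X e l ∧ Y e (l+1) ≤ Y e l := by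
    intro l
    induction l with
    | zero =>
      constructor
      · rw [hX0]; exact (hbd 1).1.2
      · rw [hY0]; exact (hbd 1).2.2
    | succ l ih =>
      have step := hFmono _ _ _ _ (hbd (l+1)).1 (hbd l).1 (hbd (l+1)).2 (hbd l).2 ih.1 ih.2
      constructor
      · calc X e (l+1+1) = _ := hX e (l+1)
          _ ≤ _ := step.1
          _ = X e (l+1) := (hX e l).symm
      · calc Y e (l+1+1) = _ := hY e (l+1)
          _ ≤ _ := step.2
          _ = Y e (l+1) := (hY e l).symm
  -- any fixed point lower-bounds the sequences
  have hlb : ∀ x y : ℝ, x ∈ Icc (0:ℝ) 1 → y ∈ Icc (0:ℝ) 1 →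
      x = e * lamL.eval (1 - rhoL.eval (1 - x)) * LamJ.eval (1 - rhoJ.eval (1 - y)) →
      y = e * LamL.eval (1 - rhoL.eval (1 - x)) * lamJ.eval (1 - rhoJ.eval (1 - y)) →
      ∀ l, x ≤ X e l ∧ y ≤ Y e l := by
    intro x y hx hy hfx hfy l
    induction l with
    | zero => rw [hX0, hY0]; exact ⟨hx.2, hy.2⟩
    | succ l ih =>
      have step := hFmono x (X e l) y (Y e l) hx (hbd l).1 hy (hbd l).2 ih.1 ih.2
      constructor
      · rw [hX]; calc x = _ := hfx
          _ ≤ _ := step.1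
      · rw [hY]; calc y = _ := hfy
          _ ≤ _ := step.2
  constructor
  · -- limit 0 ⇒ no fixed point with x > 0
    rintro htend ⟨x, y, ⟨hx0, hx1⟩, hy, hfx, hfy⟩
    have hle := hlb x y ⟨le_of_lt hx0, hx1⟩ hy hfx hfy
    have : x ≤ 0 := ge_of_tendsto' htend fun l => (hle l).1
    linarith
  · -- no fixed point with x > 0 ⇒ limit 0
    intro hno
    have hXanti : Antitone (X e) := antitone_nat_of_succ_le fun l => (hanti l).1
    have hYanti : Antitone (Y e) := antitone_nat_of_succ_le fun l => (hanti l).2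
    have hXbdd : BddBelow (Set.range (X e)) := ⟨0, by rintro v ⟨l, rfl⟩; exact (hbd l).1.1⟩
    have hYbdd : BddBelow (Set.range (Y e)) := ⟨0, by rintro v ⟨l, rfl⟩; exact (hbd l).2.1⟩
    have hXt : Tendsto (X e) atTop (nhds (⨅ l, X e l)) := tendsto_atTop_ciInf hXanti hXbdd
    have hYt : Tendsto (Y e) atTop (nhds (⨅ l, Y e l)) := tendsto_atTop_ciInf hYanti hYbdd
    set xs := ⨅ l, X e l with hxs
    set ys := ⨅ l, Y e l with hys
    have hxsI : xs ∈ Icc (0:ℝ) 1 :=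
      ⟨le_ciInf fun l => (hbd l).1.1, (ciInf_le hXbdd 0).trans (le_of_eq (hX0 e))⟩
    have hysI : ys ∈ Icc (0:ℝ) 1 :=
      ⟨le_ciInf fun l => (hbd l).2.1, (ciInf_le hYbdd 0).trans (le_of_eq (hY0 e))⟩
    -- limit is a fixed point
    have cX : Tendsto (fun l => lamL.eval (1 - rhoL.eval (1 - X e l))) atTop
        (nhds (lamL.eval (1 - rhoL.eval (1 - xs)))) :=
      (lamL.continuous.tendsto _).comp (tendsto_const_nhds.sub
        ((rhoL.continuous.tendsto _).comp (tendsto_const_nhds.sub hXt)))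
    have cX2 : Tendsto (fun l => LamL.eval (1 - rhoL.eval (1 - X e l))) atTop
        (nhds (LamL.eval (1 - rhoL.eval (1 - xs)))) :=
      (LamL.continuous.tendsto _).comp (tendsto_const_nhds.sub
        ((rhoL.continuous.tendsto _).comp (tendsto_const_nhds.sub hXt)))
    have cY : Tendsto (fun l => LamJ.eval (1 - rhoJ.eval (1 - Y e l))) atTop
        (nhds (LamJ.eval (1 - rhoJ.eval (1 - ys)))) :=
      (LamJ.continuous.tendsto _).comp (tendsto_const_nhds.sub
        ((rhoJ.continuous.tendsto _).comp (tendsto_const_nhds.sub hYt)))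
    have cY2 : Tendsto (fun l => lamJ.eval (1 - rhoJ.eval (1 - Y e l))) atTop
        (nhds (lamJ.eval (1 - rhoJ.eval (1 - ys)))) :=
      (lamJ.continuous.tendsto _).comp (tendsto_const_nhds.sub
        ((rhoJ.continuous.tendsto _).comp (tendsto_const_nhds.sub hYt)))
    have h1 : Tendsto (fun l => X e (l+1)) atTop (nhds xs) :=
      hXt.comp (tendsto_add_atTop_nat 1)
    have h1' : Tendsto (fun l => Y e (l+1)) atTop (nhds ys) :=
      hYt.comp (tendsto_add_atTop_nat 1)
    have h2 : Tendsto (fun l => X e (l+1)) atTop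
        (nhds (e * lamL.eval (1 - rhoL.eval (1 - xs)) * LamJ.eval (1 - rhoJ.eval (1 - ys)))) :=
      ((tendsto_const_nhds.mul cX).mul cY).congr fun l => (hX e l).symm
    have h2' : Tendsto (fun l => Y e (l+1)) atTop
        (nhds (e * LamL.eval (1 - rhoL.eval (1 - xs)) * lamJ.eval (1 - rhoJ.eval (1 - ys)))) :=
      ((tendsto_const_nhds.mul cX2).mul cY2).congr fun l => (hY e l).symm
    have hfx := tendsto_nhds_unique h1 h2
    have hfy := tendsto_nhds_unique h1' h2'
    rcases lt_or_ge 0 xs with hpos | hneg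
    · exact absurd ⟨xs, ys, ⟨hpos, hxsI.2⟩, hysI, hfx, hfy⟩ hno
    · have : xs = 0 := le_antisymm hneg hxsI.1
      rwa [this] at hXt
end

section
/- Let λ_L(x)=x, ρ_L(x)=ρ₂x+ρ₃x²+ρ₄x³ with nonnegative coefficients summing to 1 and ρ₄ > 0, and ε_L = 1/(1+ρ₃+2ρ₄). For ε ∈ (ε_L,1), define x_s(ε) = max{x∈[0,1] : ε(1−ρ_L(1−x)) − x ≥ 0}. Then x_s(ε) = (ρ₃+3ρ₄ − √((ρ₃+ρ₄)² + 4ρ₄(1/ε − 1)))/(2ρ₄), and x_s(ε) ∈ (0,1]. -/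
open Set

set_option maxHeartbeats 1600000 in
/-- For λ_L(x)=x, ρ_L(x)=ρ₂x+ρ₃x²+ρ₄x³ with ρ₄ > 0,
ε_L = 1/(1+ρ₃+2ρ₄) and ε ∈ (ε_L,1), the stuck point
x_s(ε) = max{x ∈ [0,1] : ε(1−ρ_L(1−x)) − x ≥ 0} equals
(ρ₃+3ρ₄ − √((ρ₃+ρ₄)² + 4ρ₄(1/ε − 1)))/(2ρ₄), and lies in (0,1]. -/
theorem ldpcl_stuck_point_rho4_pos
    (ρ2 ρ3 ρ4 : ℝ) (h2 : 0 ≤ ρ2) (h3 : 0 ≤ ρ3) (h4 : 0 < ρ4)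
    (hsum : ρ2 + ρ3 + ρ4 = 1)
    (ε : ℝ) (hε : ε ∈ Ioo (1 / (1 + ρ3 + 2 * ρ4)) 1) :
    IsGreatest {x ∈ Icc (0:ℝ) 1 |
        0 ≤ ε * (1 - (ρ2 * (1 - x) + ρ3 * (1 - x)^2 + ρ4 * (1 - x)^3)) - x}
      ((ρ3 + 3 * ρ4 - Real.sqrt ((ρ3 + ρ4)^2 + 4 * ρ4 * (1 / ε - 1))) / (2 * ρ4)) ∧
    (ρ3 + 3 * ρ4 - Real.sqrt ((ρ3 + ρ4)^2 + 4 * ρ4 * (1 / ε - 1))) / (2 * ρ4) ∈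
      Ioc (0:ℝ) 1 := by
  obtain ⟨hεL, hε1⟩ := hε
  have hden : 0 < 1 + ρ3 + 2*ρ4 := by linarith
  have hε0 : 0 < ε := lt_trans (by positivity) hεL
  have hεmul : 1 < ε * (1 + ρ3 + 2*ρ4) := (div_lt_iff₀ hden).1 hεL
  have hinv1 : 1 < 1/ε := by rw [lt_div_iff₀ hε0]; linarith
  have hinv2 : 1/ε < 1 + ρ3 + 2*ρ4 := by rw [div_lt_iff₀ hε0]; nlinarith
  have hD0 : 0 < (ρ3 + ρ4)^2 + 4 * ρ4 * (1 / ε - 1) := by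
    nlinarith [sq_nonneg (ρ3 + ρ4), mul_pos h4 (sub_pos.2 hinv1)]
  set s : ℝ := Real.sqrt ((ρ3 + ρ4)^2 + 4 * ρ4 * (1 / ε - 1)) with hsdef
  clear_value s
  have hs0 : 0 ≤ s := hsdef ▸ Real.sqrt_nonneg _
  have hs2 : s^2 = (ρ3 + ρ4)^2 + 4 * ρ4 * (1 / ε - 1) := hsdef ▸ Real.sq_sqrt hD0.le
  have hs2' : ε * s^2 = ε * (ρ3 + ρ4)^2 + 4*ρ4*(1 - ε) := by
    rw [hs2]; field_simp
  have hsb : s < ρ3 + 3*ρ4 := by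
    have hlt : s^2 < (ρ3 + 3*ρ4)^2 := by
      rw [hs2]
      nlinarith [mul_pos h4 (show (0:ℝ) < 1 + ρ3 + 2*ρ4 - 1/ε by linarith)]
    nlinarith
  have has : ρ3 + ρ4 < s := by
    have hlt : (ρ3 + ρ4)^2 < s^2 := by
      rw [hs2]; nlinarith [mul_pos h4 (sub_pos.2 hinv1)]
    nlinarith
  set xs : ℝ := (ρ3 + 3 * ρ4 - s) / (2 * ρ4) with hxsdef
  clear_value xs
  have h2ρ4 : (0:ℝ) < 2 * ρ4 := by linarith
  have hxs0 : 0 < xs := by rw [hxsdef]; exact div_pos (by linarith) h2ρ4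
  have hxs1 : xs ≤ 1 := by rw [hxsdef, div_le_one h2ρ4]; linarith
  have hρxs : 2 * ρ4 * xs = ρ3 + 3*ρ4 - s := by
    rw [hxsdef]; field_simp
  have hρ2 : ρ2 = 1 - ρ3 - ρ4 := by linarith
  have hsq : 4 * ρ4 * (ρ4 * xs^2) = (ρ3 + 3*ρ4 - s)^2 := by
    rw [← hρxs]; ring
  have hq : ε * (ρ4 * xs^2 - (ρ3 + 3*ρ4) * xs + (1 + ρ3 + 2*ρ4)) = 1 := by
    have h4ne : (4:ℝ) * ρ4 ≠ 0 := by positivity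
    have key : 4 * ρ4 * (ε * (ρ4 * xs^2 - (ρ3 + 3*ρ4) * xs + (1 + ρ3 + 2*ρ4)) - 1) = 0 := by
      linear_combination ε * hsq - (2 * ε * (ρ3 + 3*ρ4)) * hρxs + hs2'
    have := mul_eq_zero.1 key
    rcases this with h | h
    · exact absurd h h4ne
    · linarith
  refine ⟨⟨⟨⟨hxs0.le, hxs1⟩, ?_⟩, ?_⟩, hxs0, hxs1⟩
  · have hfactor : ε * (1 - (ρ2 * (1 - xs) + ρ3 * (1 - xs)^2 + ρ4 * (1 - xs)^3)) - xs
        = xs * (ε * (ρ4 * xs^2 - (ρ3 + 3*ρ4) * xs + (1 + ρ3 + 2*ρ4)) - 1) := by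
      rw [hρ2]; ring
    rw [hfactor, hq]; simp
  · rintro x ⟨⟨hx0, hx1⟩, hfx⟩
    by_contra hcon
    push_neg at hcon
    have hxpos : 0 < x := lt_trans hxs0 hcon
    have hneg : ρ4 * (x + xs) - (ρ3 + 3*ρ4) < 0 := by
      nlinarith [mul_le_mul_of_nonneg_left hx1 h4.le]
    have hiden : ε * (1 - (ρ2 * (1 - x) + ρ3 * (1 - x)^2 + ρ4 * (1 - x)^3)) - x
        = x * ε * (x - xs) * (ρ4 * (x + xs) - (ρ3 + 3*ρ4))
          + x * (ε * (ρ4 * xs^2 - (ρ3 + 3*ρ4) * xs + (1 + ρ3 + 2*ρ4)) - 1) := by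
      rw [hρ2]; ring
    rw [hiden, hq] at hfx
    simp only [sub_self, mul_zero, add_zero] at hfx
    have : x * ε * (x - xs) * (ρ4 * (x + xs) - (ρ3 + 3*ρ4)) < 0 :=
      mul_neg_of_pos_of_neg (mul_pos (mul_pos hxpos hε0) (sub_pos.2 hcon)) hneg
    linarith
end

section
/- Let 0 < ε_L < ε_G < 1, and let (λ_L, ρ_L) be local degree distributions with BP threshold ε_L, additive gap to capacity δ_L = 1 − ε_L − R(λ_L,ρ_L) where R(λ,ρ) = 1 − (∫₀¹ρ)/(∫₀¹λ), and let (λ_J, ρ_J) be joint degree distributions with BP threshold ε_J ≤ ε_G and gap δ_J = 1 − ε_J − R(λ_J,ρ_J). Set P₀ = ε_L/ε_G, and suppose the global LDPCL threshold equals ε_G and the LDPCL design rate is R = 1 − (∫₀¹ρ_L)/(∫₀¹λ_L) − (1−P₀)·(∫₀¹ρ_J)/(∫₀¹λ_J). Then the global additive gap to capacity δ = 1 − R − ε_G satisfies δ ≤ δ_L + δ_J·(1 − P₀). -/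
open Set intervalIntegral

/-- For the LDPCL construction with P₀ = ε_L/ε_G and joint
threshold ε_J ≤ ε_G, the global additive gap to capacity satisfies
δ ≤ δ_L + δ_J·(1 − P₀). -/
theorem ldpcl_gap_to_capacity
    (lamL rhoL lamJ rhoJ : ℝ → ℝ)
    (εL εG εJ : ℝ)
    (h0 : 0 < εL) (hLG : εL < εG) (hG1 : εG < 1) (hJ : εJ ≤ εG) :
    let IL : ℝ := (∫ t in (0:ℝ)..1, rhoL t) / (∫ t in (0:ℝ)..1, lamL t)
    let IJ : ℝ := (∫ t in (0:ℝ)..1, rhoJ t) / (∫ t in (0:ℝ)..1, lamJ t)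
    let RL : ℝ := 1 - IL
    let RJ : ℝ := 1 - IJ
    let δL : ℝ := 1 - εL - RL
    let δJ : ℝ := 1 - εJ - RJ
    let P0 : ℝ := εL / εG
    let R : ℝ := 1 - IL - (1 - P0) * IJ
    let δ : ℝ := 1 - R - εG
    δ ≤ δL + δJ * (1 - P0) := by
  intro IL IJ RL RJ δL δJ P0 R δ
  have hεG : (0:ℝ) < εG := h0.trans hLG
  have hP0 : P0 = εL / εG := rfl
  simp only [δ, R, δL, δJ, RL, RJ, P0]
  have key : (1 - εL/εG) * εJ - εG + εL = (εJ - εG) * (εG - εL) / εG := by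
    field_simp; ring
  nlinarith [mul_nonneg (sub_nonneg.2 hJ) (sub_nonneg.2 hLG.le),
    div_nonpos_of_nonpos_of_nonneg (by nlinarith : (εJ - εG) * (εG - εL) ≤ 0) hεG.le]
end
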